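/- Let p > 2, ν > 0, α, β > 1 with α + β = p, and let c₁, c₂ > 0 satisfy c₁^{p-2} + να c₁^{α-2}c₂^{β} = 1 and c₂^{p-2} + νβ c₁^{α}c₂^{β-2} = 1. Define θ₁₁ = (p−1)c₁^{p-2} + να(α−1)c₁^{α-2}c₂^{β}, θ₂₂ = (p−1)c₂^{p-2} + νβ(β−1)c₁^{α}c₂^{β-2}, and θ₁₂ = θ₂₁ = ναβ c₁^{α-1}c₂^{β-1}. Then: (i) θ₁₁ = p − 1 − ναβ c₁^{α-2}c₂^{β} and θ₂₂ = p − 1 − ναβ c₁^{α}c₂^{β-2}; (ii) θ₁₁ + (c₂/c₁)θ₂₁ = p − 1 and θ₁₂ + (c₂/c₁)θ₂₂ = (c₂/c₁)(p − 1), i.e. the vector (1, c₂/c₁)ᵀ is an eigenvector of the matrix (θ_{ij}) with eigenvalue p − 1. -/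
import Mathlib


open Real

noncomputable section

theorem stmt (p ν α β c₁ c₂ : ℝ) (hp : 2 < p) (hν : 0 < ν) (hα : 1 < α) (hβ : 1 < β)
    (hαβ : α + β = p) (hc₁ : 0 < c₁) (hc₂ : 0 < c₂)
    (hsync₁ : c₁ ^ (p-2) + ν*α * c₁ ^ (α-2) * c₂ ^ β = 1)
    (hsync₂ : c₂ ^ (p-2) + ν*β * c₁ ^ α * c₂ ^ (β-2) = 1)
    (θ₁₁ θ₂₂ θ₁₂ θ₂₁ : ℝ)
    (hθ₁₁ : θ₁₁ = (p-1) * c₁ ^ (p-2) + ν*α*(α-1) * c₁ ^ (α-2) * c₂ ^ β)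
    (hθ₂₂ : θ₂₂ = (p-1) * c₂ ^ (p-2) + ν*β*(β-1) * c₁ ^ α * c₂ ^ (β-2))
    (hθ₁₂ : θ₁₂ = ν*α*β * c₁ ^ (α-1) * c₂ ^ (β-1))
    (hθ₂₁ : θ₂₁ = ν*α*β * c₁ ^ (α-1) * c₂ ^ (β-1)) :
    θ₁₁ = p - 1 - ν*α*β * c₁ ^ (α-2) * c₂ ^ β ∧
    θ₂₂ = p - 1 - ν*α*β * c₁ ^ α * c₂ ^ (β-2) ∧
    θ₁₁ + (c₂/c₁) * θ₂₁ = p - 1 ∧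
    θ₁₂ + (c₂/c₁) * θ₂₂ = (c₂/c₁) * (p - 1) := by
  have ha1 : c₁ ^ (α-1) = c₁ ^ (α-2) * c₁ := by
    rw [show α-1 = (α-2)+1 by ring, rpow_add_one hc₁.ne']
  have ha0 : c₁ ^ α = c₁ ^ (α-1) * c₁ := by
    rw [← rpow_add_one hc₁.ne']; norm_num
  have hb1 : c₂ ^ β = c₂ ^ (β-1) * c₂ := by
    rw [← rpow_add_one hc₂.ne']; norm_num
  have hb0 : c₂ ^ (β-1) = c₂ ^ (β-2) * c₂ := by
    rw [show β-1 = (β-2)+1 by ring, rpow_add_one hc₂.ne']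
  have h1 : θ₁₁ = p - 1 - ν*α*β * c₁ ^ (α-2) * c₂ ^ β := by
    rw [hθ₁₁]
    linear_combination (p-1)*hsync₁ + ν*α*(c₁ ^ (α-2))*(c₂ ^ β)*hαβ
  have h2 : θ₂₂ = p - 1 - ν*α*β * c₁ ^ α * c₂ ^ (β-2) := by
    rw [hθ₂₂]
    linear_combination (p-1)*hsync₂ + ν*β*(c₁ ^ α)*(c₂ ^ (β-2))*hαβ
  refine ⟨h1, h2, ?_, ?_⟩
  · rw [h1, hθ₂₁, ha1, hb1]
    field_simp
    ring
  · rw [hθ₁₂, h2, ha0, ha1, hb0]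
    field_simp
    ring
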